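/- arXiv:2211.09759 — 3 statements merged into one kernel-verified Lean document; each statement's English description precedes it below -/
import Mathlib

section
/- For every smooth function u : ℝ³ → ℝ of the variables (t,x,y), with N := u_{txy} − (u_{xx}u_{xy})_x − (u_{xy}u_{yy})_y, the following identity holds at every point of ℝ³: 2·u_{yy}·N = ∂_t(u_{xy}u_{yy}) + ∂_x(u_{ty}u_{yy} − u_{yy}³/3 − 2u_{xx}u_{xy}u_{yy} − u_{xy}³/3) + ∂_y(u_{xx}u_{xy}² − u_{ty}u_{xy} − u_{yy}²u_{xy}). In particular, the dispersionless Nizhnik equation admits the conservation-law characteristic u_{yy}. -/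
/-- Partial derivative with respect to `t` of a function on `ℝ³ = ℝ × ℝ × ℝ` with
coordinates `(t, x, y)`. -/
noncomputable def pt (u : ℝ × ℝ × ℝ → ℝ) : ℝ × ℝ × ℝ → ℝ :=
  fun p => deriv (fun s => u (s, p.2.1, p.2.2)) p.1

/-- Partial derivative with respect to `x`. -/
noncomputable def px (u : ℝ × ℝ × ℝ → ℝ) : ℝ × ℝ × ℝ → ℝ :=
  fun p => deriv (fun s => u (p.1, s, p.2.2)) p.2.1

/-- Partial derivative with respect to `y`. -/
noncomputable def py (u : ℝ × ℝ × ℝ → ℝ) : ℝ × ℝ × ℝ → ℝ :=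
  fun p => deriv (fun s => u (p.1, p.2.1, s)) p.2.2

abbrev E3 : Type := ℝ × ℝ × ℝ

lemma lineT (p : E3) (s : ℝ) :
    HasDerivAt (fun s : ℝ => ((s, p.2.1, p.2.2) : E3)) ((1:ℝ), (0:ℝ), (0:ℝ)) s :=
  (hasDerivAt_id s).prodMk ((hasDerivAt_const s p.2.1).prodMk (hasDerivAt_const s p.2.2))
lemma lineX (p : E3) (s : ℝ) :
    HasDerivAt (fun s : ℝ => ((p.1, s, p.2.2) : E3)) ((0:ℝ), (1:ℝ), (0:ℝ)) s :=
  (hasDerivAt_const s p.1).prodMk ((hasDerivAt_id s).prodMk (hasDerivAt_const s p.2.2))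
lemma lineY (p : E3) (s : ℝ) :
    HasDerivAt (fun s : ℝ => ((p.1, p.2.1, s) : E3)) ((0:ℝ), (0:ℝ), (1:ℝ)) s :=
  (hasDerivAt_const s p.1).prodMk ((hasDerivAt_const s p.2.1).prodMk (hasDerivAt_id s))

lemma pt_eq {f : E3 → ℝ} (hf : DifferentiableAt ℝ f p) :
    pt f p = fderiv ℝ f p (1, 0, 0) :=
  (hf.hasFDerivAt.comp_hasDerivAt p.1 (lineT p p.1)).deriv
lemma px_eq {f : E3 → ℝ} {p : E3} (hf : DifferentiableAt ℝ f p) :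
    px f p = fderiv ℝ f p (0, 1, 0) :=
  (hf.hasFDerivAt.comp_hasDerivAt p.2.1 (lineX p p.2.1)).deriv
lemma py_eq {f : E3 → ℝ} {p : E3} (hf : DifferentiableAt ℝ f p) :
    py f p = fderiv ℝ f p (0, 0, 1) :=
  (hf.hasFDerivAt.comp_hasDerivAt p.2.2 (lineY p p.2.2)).deriv

lemma contDiff_pt {f : E3 → ℝ} (hf : ContDiff ℝ (⊤ : ℕ∞) f) : ContDiff ℝ (⊤ : ℕ∞) (pt f) := by
  have : pt f = fun p => fderiv ℝ f p (1, 0, 0) :=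
    funext fun p => pt_eq (hf.differentiable (by simp) p)
  rw [this]
  exact (hf.fderiv_right (by simp)).clm_apply contDiff_const
lemma contDiff_px {f : E3 → ℝ} (hf : ContDiff ℝ (⊤ : ℕ∞) f) : ContDiff ℝ (⊤ : ℕ∞) (px f) := by
  have : px f = fun p => fderiv ℝ f p (0, 1, 0) :=
    funext fun p => px_eq (hf.differentiable (by simp) p)
  rw [this]
  exact (hf.fderiv_right (by simp)).clm_apply contDiff_const
lemma contDiff_py {f : E3 → ℝ} (hf : ContDiff ℝ (⊤ : ℕ∞) f) : ContDiff ℝ (⊤ : ℕ∞) (py f) := by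
  have : py f = fun p => fderiv ℝ f p (0, 0, 1) :=
    funext fun p => py_eq (hf.differentiable (by simp) p)
  rw [this]
  exact (hf.fderiv_right (by simp)).clm_apply contDiff_const

lemma mixed {f : E3 → ℝ} (hf : ContDiff ℝ (⊤ : ℕ∞) f) (p v w : E3) :
    fderiv ℝ (fun q => fderiv ℝ f q v) p w = fderiv ℝ (fun q => fderiv ℝ f q w) p v := by
  have hd : DifferentiableAt ℝ (fderiv ℝ f) p :=
    ((hf.fderiv_right (m := (⊤ : ℕ∞)) (by simp)).differentiable (by simp)) p
  have h1 : ∀ z : E3, fderiv ℝ (fun q => fderiv ℝ f q z) p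
      = (fderiv ℝ (fderiv ℝ f) p).flip z := by
    intro z
    rw [fderiv_clm_apply hd (differentiableAt_const z)]
    simp
  have hsymm : ∀ v w : E3, fderiv ℝ (fderiv ℝ f) p v w = fderiv ℝ (fderiv ℝ f) p w v :=
    second_derivative_symmetric (fun y => (hf.differentiable (by simp) y).hasFDerivAt)
      hd.hasFDerivAt
  rw [h1 v, h1 w]
  exact hsymm w v

lemma swap_xy {f : E3 → ℝ} (hf : ContDiff ℝ (⊤ : ℕ∞) f) (p : E3) :
    px (py f) p = py (px f) p := by
  have hpy : py f = fun q => fderiv ℝ f q (0, 0, 1) :=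
    funext fun q => py_eq (hf.differentiable (by simp) q)
  have hpx : px f = fun q => fderiv ℝ f q (0, 1, 0) :=
    funext fun q => px_eq (hf.differentiable (by simp) q)
  rw [px_eq ((contDiff_py hf).differentiable (by simp) p),
      py_eq ((contDiff_px hf).differentiable (by simp) p), hpy, hpx]
  exact mixed hf p _ _
lemma swap_tx {f : E3 → ℝ} (hf : ContDiff ℝ (⊤ : ℕ∞) f) (p : E3) :
    pt (px f) p = px (pt f) p := by
  have hpx : px f = fun q => fderiv ℝ f q (0, 1, 0) :=
    funext fun q => px_eq (hf.differentiable (by simp) q)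
  have hpt : pt f = fun q => fderiv ℝ f q (1, 0, 0) :=
    funext fun q => pt_eq (hf.differentiable (by simp) q)
  rw [pt_eq ((contDiff_px hf).differentiable (by simp) p),
      px_eq ((contDiff_pt hf).differentiable (by simp) p), hpx, hpt]
  exact mixed hf p _ _
lemma swap_ty {f : E3 → ℝ} (hf : ContDiff ℝ (⊤ : ℕ∞) f) (p : E3) :
    pt (py f) p = py (pt f) p := by
  have hpy : py f = fun q => fderiv ℝ f q (0, 0, 1) :=
    funext fun q => py_eq (hf.differentiable (by simp) q)
  have hpt : pt f = fun q => fderiv ℝ f q (1, 0, 0) :=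
    funext fun q => pt_eq (hf.differentiable (by simp) q)
  rw [pt_eq ((contDiff_py hf).differentiable (by simp) p),
      py_eq ((contDiff_pt hf).differentiable (by simp) p), hpy, hpt]
  exact mixed hf p _ _

lemma hdT {f : E3 → ℝ} (hf : ContDiff ℝ (⊤ : ℕ∞) f) (p : E3) :
    HasDerivAt (fun s => f (s, p.2.1, p.2.2)) (pt f p) p.1 :=
  ((hf.differentiable (by simp) p).hasFDerivAt.comp_hasDerivAt p.1 (lineT p p.1)).congr_deriv
    (pt_eq (hf.differentiable (by simp) p)).symm
lemma hdX {f : E3 → ℝ} (hf : ContDiff ℝ (⊤ : ℕ∞) f) (p : E3) :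
    HasDerivAt (fun s => f (p.1, s, p.2.2)) (px f p) p.2.1 :=
  ((hf.differentiable (by simp) p).hasFDerivAt.comp_hasDerivAt p.2.1 (lineX p p.2.1)).congr_deriv
    (px_eq (hf.differentiable (by simp) p)).symm
lemma hdY {f : E3 → ℝ} (hf : ContDiff ℝ (⊤ : ℕ∞) f) (p : E3) :
    HasDerivAt (fun s => f (p.1, p.2.1, s)) (py f p) p.2.2 :=
  ((hf.differentiable (by simp) p).hasFDerivAt.comp_hasDerivAt p.2.2 (lineY p p.2.2)).congr_deriv
    (py_eq (hf.differentiable (by simp) p)).symm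

theorem characteristic_uyy_identity (u : ℝ × ℝ × ℝ → ℝ) (hu : ContDiff ℝ (⊤ : ℕ∞) u) :
    ∀ p : ℝ × ℝ × ℝ,
      2 * py (py u) p *
        (pt (px (py u)) p
          - px (fun q => px (px u) q * px (py u) q) p
          - py (fun q => px (py u) q * py (py u) q) p)
      = pt (fun q => px (py u) q * py (py u) q) p
        + px (fun q => pt (py u) q * py (py u) q - (py (py u) q) ^ 3 / 3
            - 2 * (px (px u) q * px (py u) q * py (py u) q) - (px (py u) q) ^ 3 / 3) p
        + py (fun q => px (px u) q * (px (py u) q) ^ 2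
            - pt (py u) q * px (py u) q - (py (py u) q) ^ 2 * px (py u) q) p := by
  intro p
  set a := px (px u) with ha_def
  set b := px (py u) with hb_def
  set c := py (py u) with hc_def
  set e := pt (py u) with he_def
  have ha : ContDiff ℝ (⊤ : ℕ∞) a := contDiff_px (contDiff_px hu)
  have hb : ContDiff ℝ (⊤ : ℕ∞) b := contDiff_px (contDiff_py hu)
  have hc : ContDiff ℝ (⊤ : ℕ∞) c := contDiff_py (contDiff_py hu)
  have he : ContDiff ℝ (⊤ : ℕ∞) e := contDiff_pt (contDiff_py hu)
  have h1 : pt (fun q => b q * c q) p = pt b p * c p + b p * pt c p :=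
    ((hdT hb p).mul (hdT hc p)).deriv
  have h2 : px (fun q => e q * c q - (c q) ^ 3 / 3 - 2 * (a q * b q * c q) - (b q) ^ 3 / 3) p
      = (px e p * c p + e p * px c p) - ((3 : ℕ) * c p ^ 2 * px c p) / 3
        - 2 * ((px a p * b p + a p * px b p) * c p + a p * b p * px c p)
        - ((3 : ℕ) * b p ^ 2 * px b p) / 3 :=
    (((((hdX he p).mul (hdX hc p)).sub (((hdX hc p).pow 3).div_const 3)).sub
      ((((hdX ha p).mul (hdX hb p)).mul (hdX hc p)).const_mul 2)).sub
      (((hdX hb p).pow 3).div_const 3)).deriv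
  have h3 : py (fun q => a q * (b q) ^ 2 - e q * b q - (c q) ^ 2 * b q) p
      = (py a p * b p ^ 2 + a p * ((2 : ℕ) * b p ^ 1 * py b p))
        - (py e p * b p + e p * py b p)
        - (((2 : ℕ) * c p ^ 1 * py c p) * b p + c p ^ 2 * py b p) :=
    ((((hdY ha p).mul ((hdY hb p).pow 2)).sub ((hdY he p).mul (hdY hb p))).sub
      (((hdY hc p).pow 2).mul (hdY hb p))).deriv
  have h4 : px (fun q => a q * b q) p = px a p * b p + a p * px b p :=
    ((hdX ha p).mul (hdX hb p)).deriv
  have h5 : py (fun q => b q * c q) p = py b p * c p + b p * py c p :=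
    ((hdY hb p).mul (hdY hc p)).deriv
  have s1 : pt c p = py e p := swap_ty (contDiff_py hu) p
  have s2 : px e p = pt b p := (swap_tx (contDiff_py hu) p).symm
  have s3 : px c p = py b p := swap_xy (contDiff_py hu) p
  have s4 : py a p = px b p := by
    have hcomm : py (px u) = px (py u) := funext fun q => (swap_xy hu q).symm
    have := (swap_xy (contDiff_px hu) p).symm
    rw [hcomm] at this
    exact this
  rw [h1, h2, h3, h4, h5, s1, s2, s3, s4]
  push_cast
  ring
end

section
/- Let A ≠ 0 and B be real constants, let T : ℝ → ℝ be a smooth bijection whose derivative T' is nowhere zero, let F : ℝ → ℝ be a smooth function with F(t)³ = A²·T'(t) for every t, and let X⁰, Y⁰, W⁰, W¹, W² : ℝ → ℝ be smooth. Define Φ : ℝ³ → ℝ³ by Φ(t,x,y) = (T(t), F(t)x + X⁰(t), F(t)y + Y⁰(t)). Suppose u, v : ℝ³ → ℝ are smooth, v_x is nowhere zero, and (u,v) satisfies the nonlinear Lax system at every point of ℝ³. If ũ, ṽ : ℝ³ → ℝ are smooth functions satisfying, for all (t,x,y) ∈ ℝ³, ũ(Φ(t,x,y)) = A²u(t,x,y)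 − (A²T''(t)/(18T'(t)))·(x³+y³) − (A²/(2F(t)))·(X⁰'(t)x² + Y⁰'(t)y²) + W¹(t)x + W²(t)y + W⁰(t) and ṽ(Φ(t,x,y)) = A·v(t,x,y) + B, then ṽ_x is nowhere zero and (ũ,ṽ) satisfies the nonlinear Lax system at every point of ℝ³. -/
/-- The pair `(u, v)` satisfies, at every point of `ℝ³`, the nonlinear Lax system
`v_t = (1/3)(v_x³ − u_{xy}³/v_x³) + u_{xx}v_x − u_{xy}u_{yy}/v_x`,
`v_y = −u_{xy}/v_x`. -/
def SatisfiesLax (u v : ℝ × ℝ × ℝ → ℝ) : Prop :=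
  ∀ p : ℝ × ℝ × ℝ,
    pt v p = (1 / 3) * ((px v p) ^ 3 - (px (py u) p) ^ 3 / (px v p) ^ 3) +
      px (px u) p * px v p - px (py u) p * py (py u) p / px v p ∧
    py v p = -(px (py u) p) / px v p

lemma hasDerivAt_curve3 {w : ℝ × ℝ × ℝ → ℝ} (hw : Differentiable ℝ w)
    {a b c : ℝ → ℝ} {a' b' c' s : ℝ}
    (ha : HasDerivAt a a' s) (hb : HasDerivAt b b' s) (hc : HasDerivAt c c' s) :
    HasDerivAt (fun r => w (a r, b r, c r))
      (a' * fderiv ℝ w (a s, b s, c s) (1,0,0) + b' * fderiv ℝ w (a s, b s, c s) (0,1,0)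
        + c' * fderiv ℝ w (a s, b s, c s) (0,0,1)) s := by
  have h := (hw (a s, b s, c s)).hasFDerivAt.comp_hasDerivAt s (ha.prodMk (hb.prodMk hc))
  refine h.congr_deriv ?_
  have h2 : (a', b', c') = a' • ((1:ℝ),(0:ℝ),(0:ℝ)) + b' • ((0:ℝ),(1:ℝ),(0:ℝ))
      + c' • ((0:ℝ),(0:ℝ),(1:ℝ)) := by simp [Prod.ext_iff]
  rw [h2, map_add, map_add, map_smul, map_smul, map_smul]
  simp [smul_eq_mul]

lemma pt_eq_s15 {w : ℝ × ℝ × ℝ → ℝ} (hw : Differentiable ℝ w) (p : ℝ × ℝ × ℝ) :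
    pt w p = fderiv ℝ w p (1,0,0) := by
  have := hasDerivAt_curve3 hw (hasDerivAt_id p.1) (hasDerivAt_const p.1 p.2.1)
    (hasDerivAt_const p.1 p.2.2)
  simpa [pt] using this.deriv

lemma px_eq_s15 {w : ℝ × ℝ × ℝ → ℝ} (hw : Differentiable ℝ w) (p : ℝ × ℝ × ℝ) :
    px w p = fderiv ℝ w p (0,1,0) := by
  have := hasDerivAt_curve3 hw (hasDerivAt_const p.2.1 p.1) (hasDerivAt_id p.2.1)
    (hasDerivAt_const p.2.1 p.2.2)
  simpa [px] using this.deriv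

lemma py_eq_s15 {w : ℝ × ℝ × ℝ → ℝ} (hw : Differentiable ℝ w) (p : ℝ × ℝ × ℝ) :
    py w p = fderiv ℝ w p (0,0,1) := by
  have := hasDerivAt_curve3 hw (hasDerivAt_const p.2.2 p.1) (hasDerivAt_const p.2.2 p.2.1)
    (hasDerivAt_id p.2.2)
  simpa [py] using this.deriv

lemma hasDerivAt_comp3 {w : ℝ × ℝ × ℝ → ℝ} (hw : Differentiable ℝ w)
    {a b c : ℝ → ℝ} {a' b' c' s : ℝ}
    (ha : HasDerivAt a a' s) (hb : HasDerivAt b b' s) (hc : HasDerivAt c c' s) :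
    HasDerivAt (fun r => w (a r, b r, c r))
      (a' * pt w (a s, b s, c s) + b' * px w (a s, b s, c s) + c' * py w (a s, b s, c s)) s := by
  rw [pt_eq_s15 hw, px_eq_s15 hw, py_eq_s15 hw]
  exact hasDerivAt_curve3 hw ha hb hc

lemma contDiff_px_s15 {w : ℝ × ℝ × ℝ → ℝ} (hw : ContDiff ℝ (⊤ : ℕ∞) w) : ContDiff ℝ (⊤ : ℕ∞) (px w) := by
  have h1 : ContDiff ℝ (⊤ : ℕ∞) (fun p : ℝ × ℝ × ℝ => fderiv ℝ w p (0,1,0)) :=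
    (hw.fderiv_right (by simp)).clm_apply contDiff_const
  have h2 : px w = fun p : ℝ × ℝ × ℝ => fderiv ℝ w p (0,1,0) :=
    funext fun p => px_eq_s15 (hw.differentiable (by simp)) p
  rw [h2]; exact h1

lemma contDiff_py_s15 {w : ℝ × ℝ × ℝ → ℝ} (hw : ContDiff ℝ (⊤ : ℕ∞) w) : ContDiff ℝ (⊤ : ℕ∞) (py w) := by
  have h1 : ContDiff ℝ (⊤ : ℕ∞) (fun p : ℝ × ℝ × ℝ => fderiv ℝ w p (0,0,1)) :=
    (hw.fderiv_right (by simp)).clm_apply contDiff_const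
  have h2 : py w = fun p : ℝ × ℝ × ℝ => fderiv ℝ w p (0,0,1) :=
    funext fun p => py_eq_s15 (hw.differentiable (by simp)) p
  rw [h2]; exact h1

set_option maxHeartbeats 2000000 in
lemma keyalg (A f dF dX dY Tp Tpp r1 r2 a pv ptv uxx uxy uyy : ℝ)
    (hA : A ≠ 0) (hf : f ≠ 0) (ha : a ≠ 0)
    (hTpe : f ^ 3 = A ^ 2 * Tp) (hTppe : 3 * f ^ 2 * dF = A ^ 2 * Tpp)
    (h1 : ptv = 1 / 3 * (a ^ 3 - uxy ^ 3 / a ^ 3) + uxx * a - uxy * uyy / a)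
    (h2 : pv = -uxy / a) :
    A * (ptv + ((0 - dX) * f - r1 * dF) / f ^ 2 * a + ((0 - dY) * f - r2 * dF) / f ^ 2 * pv) / Tp
    = 1 / 3 * ((A * a / f) ^ 3 - (A ^ 2 * uxy / f ^ 2) ^ 3 / (A * a / f) ^ 3)
      + (A ^ 2 * uxx - A ^ 2 * Tpp / (3 * Tp) * (r1 / f) - A ^ 2 * dX / f) / f ^ 2 * (A * a / f)
      - A ^ 2 * uxy / f ^ 2 * ((A ^ 2 * uyy - A ^ 2 * Tpp / (3 * Tp) * (r2 / f) - A ^ 2 * dY / f) / f ^ 2)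
        / (A * a / f) := by
  have hTp : Tp = f ^ 3 / A ^ 2 := by rw [eq_div_iff (pow_ne_zero 2 hA)]; linarith
  have hTpp : Tpp = 3 * f ^ 2 * dF / A ^ 2 := by rw [eq_div_iff (pow_ne_zero 2 hA)]; linarith
  subst hTp hTpp h1 h2
  field_simp
  ring

set_option maxHeartbeats 2000000 in
theorem lax_point_symmetry (A B : ℝ) (hA : A ≠ 0)
    (T : ℝ → ℝ) (hT : ContDiff ℝ (⊤ : ℕ∞) T) (hTbij : Function.Bijective T)
    (hT' : ∀ t, deriv T t ≠ 0)
    (F : ℝ → ℝ) (hF : ContDiff ℝ (⊤ : ℕ∞) F) (hF3 : ∀ t, F t ^ 3 = A ^ 2 * deriv T t)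
    (X0 Y0 W0 W1 W2 : ℝ → ℝ) (hX0 : ContDiff ℝ (⊤ : ℕ∞) X0) (hY0 : ContDiff ℝ (⊤ : ℕ∞) Y0)
    (hW0 : ContDiff ℝ (⊤ : ℕ∞) W0) (hW1 : ContDiff ℝ (⊤ : ℕ∞) W1) (hW2 : ContDiff ℝ (⊤ : ℕ∞) W2)
    (Φ : ℝ × ℝ × ℝ → ℝ × ℝ × ℝ)
    (hΦ : ∀ t x y : ℝ, Φ (t, x, y) = (T t, F t * x + X0 t, F t * y + Y0 t))
    (u v : ℝ × ℝ × ℝ → ℝ) (hu : ContDiff ℝ (⊤ : ℕ∞) u) (hv : ContDiff ℝ (⊤ : ℕ∞) v)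
    (hvx : ∀ p : ℝ × ℝ × ℝ, px v p ≠ 0) (huv : SatisfiesLax u v)
    (ut vt : ℝ × ℝ × ℝ → ℝ) (hut : ContDiff ℝ (⊤ : ℕ∞) ut) (hvt : ContDiff ℝ (⊤ : ℕ∞) vt)
    (hueq : ∀ t x y : ℝ,
      ut (Φ (t, x, y)) =
        A ^ 2 * u (t, x, y) - A ^ 2 * deriv (deriv T) t / (18 * deriv T t) * (x ^ 3 + y ^ 3)
        - A ^ 2 / (2 * F t) * (deriv X0 t * x ^ 2 + deriv Y0 t * y ^ 2)
        + W1 t * x + W2 t * y + W0 t)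
    (hveq : ∀ t x y : ℝ, vt (Φ (t, x, y)) = A * v (t, x, y) + B) :
    (∀ p : ℝ × ℝ × ℝ, px vt p ≠ 0) ∧ SatisfiesLax ut vt := by
  have hTd : Differentiable ℝ T := hT.differentiable (by simp)
  have hFd : Differentiable ℝ F := hF.differentiable (by simp)
  have hX0d : Differentiable ℝ X0 := hX0.differentiable (by simp)
  have hY0d : Differentiable ℝ Y0 := hY0.differentiable (by simp)
  have hud : Differentiable ℝ u := hu.differentiable (by simp)
  have hvd : Differentiable ℝ v := hv.differentiable (by simp)
  have hutd : Differentiable ℝ ut := hut.differentiable (by simp)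
  have hvtd : Differentiable ℝ vt := hvt.differentiable (by simp)
  have hpxu : Differentiable ℝ (px u) := (contDiff_px_s15 hu).differentiable (by simp)
  have hpyu : Differentiable ℝ (py u) := (contDiff_py_s15 hu).differentiable (by simp)
  have hFne : ∀ s, F s ≠ 0 := by
    intro s h
    have h3 := hF3 s
    rw [h] at h3
    have h4 : A ^ 2 * deriv T s = 0 := by rw [← h3]; norm_num
    rcases mul_eq_zero.mp h4 with h' | h'
    · exact hA (by simpa using h')
    · exact hT' s h'
  have hTinf : ContDiff ℝ ((⊤:ℕ∞) : WithTop ℕ∞) T := hT.of_le (by simp)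
  have hT2d : Differentiable ℝ (deriv T) :=
    ((contDiff_infty_iff_deriv.mp hTinf).2).differentiable (by simp)
  have hFrel : ∀ s, 3 * F s ^ 2 * deriv F s = A ^ 2 * deriv (deriv T) s := by
    intro s
    have h1 : HasDerivAt (fun τ => F τ ^ 3) (3 * F s ^ 2 * deriv F s) s := by
      have := (hFd s).hasDerivAt.pow 3
      refine this.congr_deriv ?_
      all_goals norm_num
    have h2 : HasDerivAt (fun τ => A ^ 2 * deriv T τ) (A ^ 2 * deriv (deriv T) s) s :=
      (hT2d s).hasDerivAt.const_mul _
    have he : (fun τ => F τ ^ 3) = fun τ => A ^ 2 * deriv T τ := funext hF3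
    rw [he] at h1
    exact h1.unique h2
  -- slope of the affine reparametrization in x (or y)
  have hxs : ∀ t z s : ℝ, HasDerivAt (fun r => (r - z) / F t) (1 / F t) s := by
    intro t z s
    exact ((hasDerivAt_id s).sub_const z).div_const (F t)
  -- the slice formulas for vt and ut
  have hVt : ∀ t b c : ℝ, vt (T t, b, c) = A * v (t, (b - X0 t)/F t, (c - Y0 t)/F t) + B := by
    intro t b c
    have h := hveq t ((b - X0 t)/F t) ((c - Y0 t)/F t)
    rw [hΦ, show F t * ((b - X0 t)/F t) + X0 t = b by field_simp [hFne t]; ring,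
      show F t * ((c - Y0 t)/F t) + Y0 t = c by field_simp [hFne t]; ring] at h
    exact h
  have hUt : ∀ t b c : ℝ, ut (T t, b, c) =
      A ^ 2 * u (t, (b - X0 t)/F t, (c - Y0 t)/F t)
        - A ^ 2 * deriv (deriv T) t / (18 * deriv T t) * (((b - X0 t)/F t) ^ 3 + ((c - Y0 t)/F t) ^ 3)
        - A ^ 2 / (2 * F t) * (deriv X0 t * ((b - X0 t)/F t) ^ 2 + deriv Y0 t * ((c - Y0 t)/F t) ^ 2)
        + W1 t * ((b - X0 t)/F t) + W2 t * ((c - Y0 t)/F t) + W0 t := by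
    intro t b c
    have h := hueq t ((b - X0 t)/F t) ((c - Y0 t)/F t)
    rw [hΦ, show F t * ((b - X0 t)/F t) + X0 t = b by field_simp [hFne t]; ring,
      show F t * ((c - Y0 t)/F t) + Y0 t = c by field_simp [hFne t]; ring] at h
    exact h
  have hPXvt : ∀ t b c : ℝ, px vt (T t, b, c)
      = A * px v (t, (b - X0 t)/F t, (c - Y0 t)/F t) / F t := by
    intro t b c
    have hcomp : HasDerivAt (fun s => v (t, (s - X0 t)/F t, (c - Y0 t)/F t))
        (1 / F t * px v (t, (b - X0 t)/F t, (c - Y0 t)/F t)) b := by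
      have := hasDerivAt_comp3 hvd (hasDerivAt_const b t) (hxs t (X0 t) b)
        (hasDerivAt_const b ((c - Y0 t)/F t))
      simpa using this
    have hline : HasDerivAt (fun s => vt (T t, s, c))
        (A * (1 / F t * px v (t, (b - X0 t)/F t, (c - Y0 t)/F t))) b := by
      rw [show (fun s => vt (T t, s, c))
          = fun s => A * v (t, (s - X0 t)/F t, (c - Y0 t)/F t) + B
        from funext fun s => hVt t s c]
      exact (hcomp.const_mul A).add_const B
    rw [show px vt (T t, b, c) = deriv (fun s => vt (T t, s, c)) b from rfl, hline.deriv]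
    ring
  have hPYvt : ∀ t b c : ℝ, py vt (T t, b, c)
      = A * py v (t, (b - X0 t)/F t, (c - Y0 t)/F t) / F t := by
    intro t b c
    have hcomp : HasDerivAt (fun s => v (t, (b - X0 t)/F t, (s - Y0 t)/F t))
        (1 / F t * py v (t, (b - X0 t)/F t, (c - Y0 t)/F t)) c := by
      have := hasDerivAt_comp3 hvd (hasDerivAt_const c t)
        (hasDerivAt_const c ((b - X0 t)/F t)) (hxs t (Y0 t) c)
      simpa using this
    have hline : HasDerivAt (fun s => vt (T t, b, s))
        (A * (1 / F t * py v (t, (b - X0 t)/F t, (c - Y0 t)/F t))) c := by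
      rw [show (fun s => vt (T t, b, s))
          = fun s => A * v (t, (b - X0 t)/F t, (s - Y0 t)/F t) + B
        from funext fun s => hVt t b s]
      exact (hcomp.const_mul A).add_const B
    rw [show py vt (T t, b, c) = deriv (fun s => vt (T t, b, s)) c from rfl, hline.deriv]
    ring
  have hPXut : ∀ t b c : ℝ, px ut (T t, b, c) =
      (A ^ 2 * px u (t, (b - X0 t)/F t, (c - Y0 t)/F t)
        - A ^ 2 * deriv (deriv T) t / (6 * deriv T t) * ((b - X0 t)/F t) ^ 2
        - A ^ 2 * deriv X0 t * ((b - X0 t)/F t) / F t + W1 t) / F t := by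
    intro t b c
    have hu1 : HasDerivAt (fun s => u (t, (s - X0 t)/F t, (c - Y0 t)/F t))
        (1 / F t * px u (t, (b - X0 t)/F t, (c - Y0 t)/F t)) b := by
      have := hasDerivAt_comp3 hud (hasDerivAt_const b t) (hxs t (X0 t) b)
        (hasDerivAt_const b ((c - Y0 t)/F t))
      simpa using this
    have h1 := hu1.const_mul (A ^ 2)
    have h2 := (((hxs t (X0 t) b).pow 3).add_const (((c - Y0 t)/F t) ^ 3)).const_mul
      (A ^ 2 * deriv (deriv T) t / (18 * deriv T t))
    have h3 := ((((hxs t (X0 t) b).pow 2).const_mul (deriv X0 t)).add_const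
      (deriv Y0 t * ((c - Y0 t)/F t) ^ 2)).const_mul (A ^ 2 / (2 * F t))
    have h4 := (hxs t (X0 t) b).const_mul (W1 t)
    have total := ((((h1.sub h2).sub h3).add h4).add_const
      (W2 t * ((c - Y0 t)/F t))).add_const (W0 t)
    have hline : HasDerivAt (fun s => ut (T t, s, c))
        ((A ^ 2 * px u (t, (b - X0 t)/F t, (c - Y0 t)/F t)
          - A ^ 2 * deriv (deriv T) t / (6 * deriv T t) * ((b - X0 t)/F t) ^ 2
          - A ^ 2 * deriv X0 t * ((b - X0 t)/F t) / F t + W1 t) / F t) b := by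
      rw [show (fun s => ut (T t, s, c)) = fun s =>
          A ^ 2 * u (t, (s - X0 t)/F t, (c - Y0 t)/F t)
          - A ^ 2 * deriv (deriv T) t / (18 * deriv T t)
            * (((s - X0 t)/F t) ^ 3 + ((c - Y0 t)/F t) ^ 3)
          - A ^ 2 / (2 * F t) * (deriv X0 t * ((s - X0 t)/F t) ^ 2
            + deriv Y0 t * ((c - Y0 t)/F t) ^ 2)
          + W1 t * ((s - X0 t)/F t) + W2 t * ((c - Y0 t)/F t) + W0 t
        from funext fun s => hUt t s c]
      refine total.congr_deriv ?_
      push_cast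
      ring
    rw [show px ut (T t, b, c) = deriv (fun s => ut (T t, s, c)) b from rfl, hline.deriv]
  have hPYut : ∀ t b c : ℝ, py ut (T t, b, c) =
      (A ^ 2 * py u (t, (b - X0 t)/F t, (c - Y0 t)/F t)
        - A ^ 2 * deriv (deriv T) t / (6 * deriv T t) * ((c - Y0 t)/F t) ^ 2
        - A ^ 2 * deriv Y0 t * ((c - Y0 t)/F t) / F t + W2 t) / F t := by
    intro t b c
    have hu1 : HasDerivAt (fun s => u (t, (b - X0 t)/F t, (s - Y0 t)/F t))
        (1 / F t * py u (t, (b - X0 t)/F t, (c - Y0 t)/F t)) c := by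
      have := hasDerivAt_comp3 hud (hasDerivAt_const c t)
        (hasDerivAt_const c ((b - X0 t)/F t)) (hxs t (Y0 t) c)
      simpa using this
    have h1 := hu1.const_mul (A ^ 2)
    have h2 := (((hxs t (Y0 t) c).pow 3).const_add (((b - X0 t)/F t) ^ 3)).const_mul
      (A ^ 2 * deriv (deriv T) t / (18 * deriv T t))
    have h3 := ((((hxs t (Y0 t) c).pow 2).const_mul (deriv Y0 t)).const_add
      (deriv X0 t * ((b - X0 t)/F t) ^ 2)).const_mul (A ^ 2 / (2 * F t))
    have h4 := (hxs t (Y0 t) c).const_mul (W2 t)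
    have total := (((((h1.sub h2).sub h3).add_const
      (W1 t * ((b - X0 t)/F t))).add h4)).add_const (W0 t)
    have hline : HasDerivAt (fun s => ut (T t, b, s))
        ((A ^ 2 * py u (t, (b - X0 t)/F t, (c - Y0 t)/F t)
          - A ^ 2 * deriv (deriv T) t / (6 * deriv T t) * ((c - Y0 t)/F t) ^ 2
          - A ^ 2 * deriv Y0 t * ((c - Y0 t)/F t) / F t + W2 t) / F t) c := by
      rw [show (fun s => ut (T t, b, s)) = fun s =>
          A ^ 2 * u (t, (b - X0 t)/F t, (s - Y0 t)/F t)
          - A ^ 2 * deriv (deriv T) t / (18 * deriv T t)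
            * (((b - X0 t)/F t) ^ 3 + ((s - Y0 t)/F t) ^ 3)
          - A ^ 2 / (2 * F t) * (deriv X0 t * ((b - X0 t)/F t) ^ 2
            + deriv Y0 t * ((s - Y0 t)/F t) ^ 2)
          + W1 t * ((b - X0 t)/F t) + W2 t * ((s - Y0 t)/F t) + W0 t
        from funext fun s => hUt t b s]
      refine total.congr_deriv ?_
      push_cast
      ring
    rw [show py ut (T t, b, c) = deriv (fun s => ut (T t, b, s)) c from rfl, hline.deriv]
  have hPXPXut : ∀ t b c : ℝ, px (px ut) (T t, b, c) =
      (A ^ 2 * px (px u) (t, (b - X0 t)/F t, (c - Y0 t)/F t)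
        - A ^ 2 * deriv (deriv T) t / (3 * deriv T t) * ((b - X0 t)/F t)
        - A ^ 2 * deriv X0 t / F t) / F t ^ 2 := by
    intro t b c
    have hu1 : HasDerivAt (fun s => px u (t, (s - X0 t)/F t, (c - Y0 t)/F t))
        (1 / F t * px (px u) (t, (b - X0 t)/F t, (c - Y0 t)/F t)) b := by
      have := hasDerivAt_comp3 hpxu (hasDerivAt_const b t) (hxs t (X0 t) b)
        (hasDerivAt_const b ((c - Y0 t)/F t))
      simpa using this
    have g2 := ((hxs t (X0 t) b).pow 2).const_mul
      (A ^ 2 * deriv (deriv T) t / (6 * deriv T t))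
    have g3 := ((hxs t (X0 t) b).const_mul (A ^ 2 * deriv X0 t)).div_const (F t)
    have total := ((((hu1.const_mul (A ^ 2)).sub g2).sub g3).add_const (W1 t)).div_const (F t)
    have hline : HasDerivAt (fun s => px ut (T t, s, c))
        ((A ^ 2 * px (px u) (t, (b - X0 t)/F t, (c - Y0 t)/F t)
          - A ^ 2 * deriv (deriv T) t / (3 * deriv T t) * ((b - X0 t)/F t)
          - A ^ 2 * deriv X0 t / F t) / F t ^ 2) b := by
      rw [show (fun s => px ut (T t, s, c)) = fun s =>
          (A ^ 2 * px u (t, (s - X0 t)/F t, (c - Y0 t)/F t)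
            - A ^ 2 * deriv (deriv T) t / (6 * deriv T t) * ((s - X0 t)/F t) ^ 2
            - A ^ 2 * deriv X0 t * ((s - X0 t)/F t) / F t + W1 t) / F t
        from funext fun s => hPXut t s c]
      refine total.congr_deriv ?_
      push_cast
      ring
    rw [show px (px ut) (T t, b, c) = deriv (fun s => px ut (T t, s, c)) b from rfl, hline.deriv]
  have hPXPYut : ∀ t b c : ℝ, px (py ut) (T t, b, c) =
      A ^ 2 * px (py u) (t, (b - X0 t)/F t, (c - Y0 t)/F t) / F t ^ 2 := by
    intro t b c
    have hu1 : HasDerivAt (fun s => py u (t, (s - X0 t)/F t, (c - Y0 t)/F t))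
        (1 / F t * px (py u) (t, (b - X0 t)/F t, (c - Y0 t)/F t)) b := by
      have := hasDerivAt_comp3 hpyu (hasDerivAt_const b t) (hxs t (X0 t) b)
        (hasDerivAt_const b ((c - Y0 t)/F t))
      simpa using this
    have total := ((((hu1.const_mul (A ^ 2)).sub_const
      (A ^ 2 * deriv (deriv T) t / (6 * deriv T t) * ((c - Y0 t)/F t) ^ 2)).sub_const
      (A ^ 2 * deriv Y0 t * ((c - Y0 t)/F t) / F t)).add_const (W2 t)).div_const (F t)
    have hline : HasDerivAt (fun s => py ut (T t, s, c))
        (A ^ 2 * px (py u) (t, (b - X0 t)/F t, (c - Y0 t)/F t) / F t ^ 2) b := by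
      rw [show (fun s => py ut (T t, s, c)) = fun s =>
          (A ^ 2 * py u (t, (s - X0 t)/F t, (c - Y0 t)/F t)
            - A ^ 2 * deriv (deriv T) t / (6 * deriv T t) * ((c - Y0 t)/F t) ^ 2
            - A ^ 2 * deriv Y0 t * ((c - Y0 t)/F t) / F t + W2 t) / F t
        from funext fun s => hPYut t s c]
      refine total.congr_deriv ?_
      push_cast
      ring
    rw [show px (py ut) (T t, b, c) = deriv (fun s => py ut (T t, s, c)) b from rfl, hline.deriv]
  have hPYPYut : ∀ t b c : ℝ, py (py ut) (T t, b, c) =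
      (A ^ 2 * py (py u) (t, (b - X0 t)/F t, (c - Y0 t)/F t)
        - A ^ 2 * deriv (deriv T) t / (3 * deriv T t) * ((c - Y0 t)/F t)
        - A ^ 2 * deriv Y0 t / F t) / F t ^ 2 := by
    intro t b c
    have hu1 : HasDerivAt (fun s => py u (t, (b - X0 t)/F t, (s - Y0 t)/F t))
        (1 / F t * py (py u) (t, (b - X0 t)/F t, (c - Y0 t)/F t)) c := by
      have := hasDerivAt_comp3 hpyu (hasDerivAt_const c t)
        (hasDerivAt_const c ((b - X0 t)/F t)) (hxs t (Y0 t) c)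
      simpa using this
    have g2 := ((hxs t (Y0 t) c).pow 2).const_mul
      (A ^ 2 * deriv (deriv T) t / (6 * deriv T t))
    have g3 := ((hxs t (Y0 t) c).const_mul (A ^ 2 * deriv Y0 t)).div_const (F t)
    have total := ((((hu1.const_mul (A ^ 2)).sub g2).sub g3).add_const (W2 t)).div_const (F t)
    have hline : HasDerivAt (fun s => py ut (T t, b, s))
        ((A ^ 2 * py (py u) (t, (b - X0 t)/F t, (c - Y0 t)/F t)
          - A ^ 2 * deriv (deriv T) t / (3 * deriv T t) * ((c - Y0 t)/F t)
          - A ^ 2 * deriv Y0 t / F t) / F t ^ 2) c := by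
      rw [show (fun s => py ut (T t, b, s)) = fun s =>
          (A ^ 2 * py u (t, (b - X0 t)/F t, (s - Y0 t)/F t)
            - A ^ 2 * deriv (deriv T) t / (6 * deriv T t) * ((s - Y0 t)/F t) ^ 2
            - A ^ 2 * deriv Y0 t * ((s - Y0 t)/F t) / F t + W2 t) / F t
        from funext fun s => hPYut t b s]
      refine total.congr_deriv ?_
      push_cast
      ring
    rw [show py (py ut) (T t, b, c) = deriv (fun s => py ut (T t, b, s)) c from rfl, hline.deriv]
  have hPTvt : ∀ t b c : ℝ, pt vt (T t, b, c) * deriv T t =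
      A * (pt v (t, (b - X0 t)/F t, (c - Y0 t)/F t)
        + ((0 - deriv X0 t) * F t - (b - X0 t) * deriv F t)/F t ^ 2
          * px v (t, (b - X0 t)/F t, (c - Y0 t)/F t)
        + ((0 - deriv Y0 t) * F t - (c - Y0 t) * deriv F t)/F t ^ 2
          * py v (t, (b - X0 t)/F t, (c - Y0 t)/F t)) := by
    intro t b c
    have hline0 : HasDerivAt (fun s => vt (s, b, c)) (pt vt (T t, b, c)) (T t) := by
      have := hasDerivAt_comp3 hvtd (hasDerivAt_id (T t)) (hasDerivAt_const (T t) b)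
        (hasDerivAt_const (T t) c)
      simpa using this
    have hg1 : HasDerivAt (fun τ => vt (T τ, b, c)) (pt vt (T t, b, c) * deriv T t) t := by
      have := hline0.comp t (hTd t).hasDerivAt
      exact this
    have hXc : HasDerivAt (fun τ => (b - X0 τ)/F τ)
        (((0 - deriv X0 t) * F t - (b - X0 t) * deriv F t)/F t ^ 2) t :=
      ((hasDerivAt_const t b).sub (hX0d t).hasDerivAt).div (hFd t).hasDerivAt (hFne t)
    have hYc : HasDerivAt (fun τ => (c - Y0 τ)/F τ)
        (((0 - deriv Y0 t) * F t - (c - Y0 t) * deriv F t)/F t ^ 2) t :=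
      ((hasDerivAt_const t c).sub (hY0d t).hasDerivAt).div (hFd t).hasDerivAt (hFne t)
    have hcomp : HasDerivAt (fun τ => v (τ, (b - X0 τ)/F τ, (c - Y0 τ)/F τ))
        (pt v (t, (b - X0 t)/F t, (c - Y0 t)/F t)
          + ((0 - deriv X0 t) * F t - (b - X0 t) * deriv F t)/F t ^ 2
            * px v (t, (b - X0 t)/F t, (c - Y0 t)/F t)
          + ((0 - deriv Y0 t) * F t - (c - Y0 t) * deriv F t)/F t ^ 2
            * py v (t, (b - X0 t)/F t, (c - Y0 t)/F t)) t := by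
      have := hasDerivAt_comp3 hvd (hasDerivAt_id t) hXc hYc
      simpa using this
    have hg2 : HasDerivAt (fun τ => vt (T τ, b, c))
        (A * (pt v (t, (b - X0 t)/F t, (c - Y0 t)/F t)
          + ((0 - deriv X0 t) * F t - (b - X0 t) * deriv F t)/F t ^ 2
            * px v (t, (b - X0 t)/F t, (c - Y0 t)/F t)
          + ((0 - deriv Y0 t) * F t - (c - Y0 t) * deriv F t)/F t ^ 2
            * py v (t, (b - X0 t)/F t, (c - Y0 t)/F t))) t := by
      rw [show (fun τ => vt (T τ, b, c))
          = fun τ => A * v (τ, (b - X0 τ)/F τ, (c - Y0 τ)/F τ) + B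
        from funext fun τ => hVt τ b c]
      exact (hcomp.const_mul A).add_const B
    exact hg1.unique hg2
  constructor
  · intro q
    obtain ⟨t, ht⟩ := hTbij.2 q.1
    have hq : q = (T t, q.2.1, q.2.2) := by rw [ht]
    rw [hq, hPXvt]
    exact div_ne_zero (mul_ne_zero hA (hvx _)) (hFne t)
  · intro q
    obtain ⟨t, ht⟩ := hTbij.2 q.1
    have hq : q = (T t, q.2.1, q.2.2) := by rw [ht]
    have hL := huv (t, (q.2.1 - X0 t)/F t, (q.2.2 - Y0 t)/F t)
    have hL1 := hL.1
    have hL2 := hL.2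
    have hvxP := hvx (t, (q.2.1 - X0 t)/F t, (q.2.2 - Y0 t)/F t)
    have hT'e : deriv T t = F t ^ 3 / A ^ 2 := by
      rw [eq_div_iff (pow_ne_zero 2 hA)]; linarith [hF3 t]
    have hT''e : deriv (deriv T) t = 3 * F t ^ 2 * deriv F t / A ^ 2 := by
      rw [eq_div_iff (pow_ne_zero 2 hA)]; linarith [hFrel t]
    have hpt := (eq_div_iff (hT' t)).mpr (hPTvt t q.2.1 q.2.2)
    constructor
    · rw [hq, hpt, hPXvt, hPXPXut, hPXPYut, hPYPYut]
      exact keyalg A (F t) (deriv F t) (deriv X0 t) (deriv Y0 t) (deriv T t)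
        (deriv (deriv T) t) (q.2.1 - X0 t) (q.2.2 - Y0 t)
        (px v (t, (q.2.1 - X0 t)/F t, (q.2.2 - Y0 t)/F t))
        (py v (t, (q.2.1 - X0 t)/F t, (q.2.2 - Y0 t)/F t))
        (pt v (t, (q.2.1 - X0 t)/F t, (q.2.2 - Y0 t)/F t))
        (px (px u) (t, (q.2.1 - X0 t)/F t, (q.2.2 - Y0 t)/F t))
        (px (py u) (t, (q.2.1 - X0 t)/F t, (q.2.2 - Y0 t)/F t))
        (py (py u) (t, (q.2.1 - X0 t)/F t, (q.2.2 - Y0 t)/F t))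
        hA (hFne t) hvxP (hF3 t) (hFrel t) hL1 hL2
    · rw [hq, hPYvt, hPXvt, hPXPYut, hL2]
      set P : ℝ × ℝ × ℝ := (t, (q.2.1 - X0 t)/F t, (q.2.2 - Y0 t)/F t) with hP
      field_simp [hFne t, hA, hvxP]
end

section
/- Suppose u, v : ℝ³ → ℝ are smooth, v_x is nowhere zero, and (u,v) satisfies the nonlinear Lax system at every point of ℝ³. Define ũ(t,x,y) = −u(t,−x,−y) and ṽ(t,x,y) = v(t,−x,−y). Then ṽ_x is nowhere zero and (ũ,ṽ) satisfies, at every point of ℝ³, the alternative system ṽ_t = −(1/3)(ṽ_x³ + ũ_{xy}³/ṽ_x³) + ũ_{xx}ṽ_x + ũ_{xy}ũ_{yy}/ṽ_x and ṽ_y = ũ_{xy}/ṽ_x. -/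
/-- The reflection `(t, x, y) ↦ (t, -x, -y)`. -/
def refl3 (p : ℝ × ℝ × ℝ) : ℝ × ℝ × ℝ := (p.1, -p.2.1, -p.2.2)

lemma px_comp_refl (f : ℝ × ℝ × ℝ → ℝ) (p : ℝ × ℝ × ℝ) :
    px (fun q => f (refl3 q)) p = -px f (refl3 p) := by
  simp only [px, refl3]
  exact deriv_comp_neg (f := fun s => f (p.1, s, -p.2.2)) (x := p.2.1)

lemma py_comp_refl (f : ℝ × ℝ × ℝ → ℝ) (p : ℝ × ℝ × ℝ) :
    py (fun q => f (refl3 q)) p = -py f (refl3 p) := by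
  simp only [py, refl3]
  exact deriv_comp_neg (f := fun s => f (p.1, -p.2.1, s)) (x := p.2.2)

lemma pt_comp_refl (f : ℝ × ℝ × ℝ → ℝ) (p : ℝ × ℝ × ℝ) :
    pt (fun q => f (refl3 q)) p = pt f (refl3 p) := by
  simp only [pt, refl3]

lemma px_neg (f : ℝ × ℝ × ℝ → ℝ) (p : ℝ × ℝ × ℝ) :
    px (fun q => -f q) p = -px f p := by
  simp only [px]; exact deriv.neg

lemma py_neg (f : ℝ × ℝ × ℝ → ℝ) (p : ℝ × ℝ × ℝ) :
    py (fun q => -f q) p = -py f p := by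
  simp only [py]; exact deriv.neg

theorem lax_alternative_system (u v : ℝ × ℝ × ℝ → ℝ)
    (hu : ContDiff ℝ (⊤ : ℕ∞) u) (hv : ContDiff ℝ (⊤ : ℕ∞) v)
    (hvx : ∀ p : ℝ × ℝ × ℝ, px v p ≠ 0) (huv : SatisfiesLax u v)
    (ut vt : ℝ × ℝ × ℝ → ℝ)
    (hutdef : ∀ t x y : ℝ, ut (t, x, y) = -u (t, -x, -y))
    (hvtdef : ∀ t x y : ℝ, vt (t, x, y) = v (t, -x, -y)) :
    (∀ p : ℝ × ℝ × ℝ, px vt p ≠ 0) ∧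
    ∀ p : ℝ × ℝ × ℝ,
      pt vt p = -(1 / 3) * ((px vt p) ^ 3 + (px (py ut) p) ^ 3 / (px vt p) ^ 3) +
        px (px ut) p * px vt p + px (py ut) p * py (py ut) p / px vt p ∧
      py vt p = px (py ut) p / px vt p := by
  have hvt : vt = fun q => v (refl3 q) := by
    funext q; obtain ⟨t, x, y⟩ := q; exact hvtdef t x y
  have hut : ut = fun q => -u (refl3 q) := by
    funext q; obtain ⟨t, x, y⟩ := q; exact hutdef t x y
  -- derivative formulas
  have hpxvt : ∀ p, px vt p = -px v (refl3 p) := by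
    intro p; rw [hvt]; exact px_comp_refl v p
  have hpyvt : ∀ p, py vt p = -py v (refl3 p) := by
    intro p; rw [hvt]; exact py_comp_refl v p
  have hptvt : ∀ p, pt vt p = pt v (refl3 p) := by
    intro p; rw [hvt]; exact pt_comp_refl v p
  have hpxut : px ut = fun p => px u (refl3 p) := by
    funext p; rw [hut, px_neg (fun q => u (refl3 q)) p, px_comp_refl u p, neg_neg]
  have hpyut : py ut = fun p => py u (refl3 p) := by
    funext p; rw [hut, py_neg (fun q => u (refl3 q)) p, py_comp_refl u p, neg_neg]
  have hpxpxut : ∀ p, px (px ut) p = -px (px u) (refl3 p) := by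
    intro p; rw [hpxut]; exact px_comp_refl (px u) p
  have hpxpyut : ∀ p, px (py ut) p = -px (py u) (refl3 p) := by
    intro p; rw [hpyut]; exact px_comp_refl (py u) p
  have hpypyut : ∀ p, py (py ut) p = -py (py u) (refl3 p) := by
    intro p; rw [hpyut]; exact py_comp_refl (py u) p
  constructor
  · intro p
    rw [hpxvt p]
    simpa using hvx (refl3 p)
  · intro p
    obtain ⟨h1, h2⟩ := huv (refl3 p)
    have hA : px v (refl3 p) ≠ 0 := hvx (refl3 p)
    rw [hptvt p, hpxvt p, hpyvt p, hpxpxut p, hpxpyut p, hpypyut p, h1, h2]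
    constructor
    · have e1 : (-px (py u) (refl3 p)) ^ 3 = -(px (py u) (refl3 p) ^ 3) := by ring
      have e2 : (-px v (refl3 p)) ^ 3 = -(px v (refl3 p) ^ 3) := by ring
      rw [e1, e2, neg_div_neg_eq, div_neg]
      ring
    · field_simp
end
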